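/- (Soundness of SDI w.r.t. LK1 on the initial domain) Under the full axiomatisation, if σ → ⊢^{d₀} Γ → σ' is derivable in SDI and the empty instantiation is compatible with σ', then ⊢ Γ is derivable in LK1. In particular, when P is the predicate 'being satisfiable', derivability of σ → ⊢^{d₀} Γ → σ' in SDI implies derivability of ⊢ Γ in LK1. -/

import Mathlib

/-- First-order terms: de Bruijn bound variables, eigenvariables,
meta-variables, and function symbols applied to argument lists. -/
inductive Tm : Type
| bv : ℕ → Tm
| ev : ℕ → Tm
| mv : ℕ → Tm
| fn : ℕ → List Tm → Tm

/-- Substitute the term `u` for the bound variable of index `k`. -/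
def Tm.bsub (k : ℕ) (u : Tm) : Tm → Tm
| bv i => if i = k then u else bv i
| ev i => ev i
| mv i => mv i
| fn f ts => fn f (ts.attach.map (fun ⟨t, _⟩ => Tm.bsub k u t))
termination_by t => sizeOf t
decreasing_by simp_wf; have := List.sizeOf_lt_of_mem ‹_›; omega

/-- Apply an instantiation of the meta-variables to a term. -/
def Tm.msub (ρ : ℕ → Tm) : Tm → Tm
| bv i => bv i
| ev i => ev i
| mv i => ρ i
| fn f ts => fn f (ts.attach.map (fun ⟨t, _⟩ => Tm.msub ρ t))
termination_by t => sizeOf t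
decreasing_by simp_wf; have := List.sizeOf_lt_of_mem ‹_›; omega

/-- Ground terms: built from eigenvariables and function symbols only. -/
inductive Tm.Ground : Tm → Prop
| ev (i : ℕ) : Ground (ev i)
| fn (f : ℕ) (ts : List Tm) : (∀ t ∈ ts, Ground t) → Ground (fn f ts)

/-- All eigenvariables of the term are `< ke` and all meta-variables are `< kx`
(and no de Bruijn variable occurs: the term is locally closed). -/
inductive Tm.VarsBelow (ke kx : ℕ) : Tm → Prop
| ev (i : ℕ) : i < ke → VarsBelow ke kx (ev i)
| mv (i : ℕ) : i < kx → VarsBelow ke kx (mv i)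
| fn (f : ℕ) (ts : List Tm) : (∀ t ∈ ts, VarsBelow ke kx t) → VarsBelow ke kx (fn f ts)

/-- The eigenvariable `y` occurs in the term. -/
inductive Tm.HasEv (y : ℕ) : Tm → Prop
| ev : HasEv y (ev y)
| fn (f : ℕ) (ts : List Tm) (t : Tm) : t ∈ ts → HasEv y t → HasEv y (fn f ts)

/-- Literals: a polarity, a predicate symbol, and a list of arguments. -/
abbrev Lit : Type := Bool × ℕ × List Tm

/-- Apply an instantiation of the meta-variables to a literal. -/
def Lit.msub (ρ : ℕ → Tm) (l : Lit) : Lit := (l.1, l.2.1, l.2.2.map (Tm.msub ρ))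

/-- First-order formulae in negation normal form. -/
inductive Fm : Type
| lit : Bool → ℕ → List Tm → Fm
| conj : Fm → Fm → Fm
| disj : Fm → Fm → Fm
| all : Fm → Fm
| ex : Fm → Fm

def Fm.bsub (k : ℕ) (u : Tm) : Fm → Fm
| lit b p ts => lit b p (ts.map (Tm.bsub k u))
| conj A B => conj (A.bsub k u) (B.bsub k u)
| disj A B => disj (A.bsub k u) (B.bsub k u)
| all A => all (A.bsub (k+1) u)
| ex A => ex (A.bsub (k+1) u)

/-- `A.opn u` is `A[x := u]`: the body of a quantifier, opened with the term `u`. -/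
def Fm.opn (u : Tm) (A : Fm) : Fm := A.bsub 0 u

/-- Apply an instantiation of the meta-variables to a formula. -/
def Fm.msub (ρ : ℕ → Tm) : Fm → Fm
| lit b p ts => lit b p (ts.map (Tm.msub ρ))
| conj A B => conj (A.msub ρ) (B.msub ρ)
| disj A B => disj (A.msub ρ) (B.msub ρ)
| all A => all (A.msub ρ)
| ex A => ex (A.msub ρ)

/-- All free variables of the formula are declared: eigenvariables `< ke`,
meta-variables `< kx`. -/
inductive Fm.VarsBelow (ke kx : ℕ) : Fm → Prop
| lit (b : Bool) (p : ℕ) (ts : List Tm) : (∀ t ∈ ts, Tm.VarsBelow ke kx t) → VarsBelow ke kx (lit b p ts)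
| conj {A B} : VarsBelow ke kx A → VarsBelow ke kx B → VarsBelow ke kx (conj A B)
| disj {A B} : VarsBelow ke kx A → VarsBelow ke kx B → VarsBelow ke kx (disj A B)
| all {A} : VarsBelow ke kx A → VarsBelow ke kx (all A)
| ex {A} : VarsBelow ke kx A → VarsBelow ke kx (ex A)

/-- The eigenvariable `y` occurs (free) in the formula. -/
inductive Fm.HasEv (y : ℕ) : Fm → Prop
| lit (b : Bool) (p : ℕ) (ts : List Tm) (t : Tm) : t ∈ ts → Tm.HasEv y t → HasEv y (lit b p ts)
| conjl {A B} : HasEv y A → HasEv y (conj A B)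
| conjr {A B} : HasEv y B → HasEv y (conj A B)
| disjl {A B} : HasEv y A → HasEv y (disj A B)
| disjr {A B} : HasEv y B → HasEv y (disj A B)
| all {A} : HasEv y A → HasEv y (all A)
| ex {A} : HasEv y A → HasEv y (ex A)

/-- The set of literals of a context. -/
def lits (Γ : Multiset Fm) : Set Lit := {l | Fm.lit l.1 l.2.1 l.2.2 ∈ Γ}

/-- Domains: the initial domain, extended by fresh eigenvariables and
fresh meta-variables. -/
inductive Dom : Type
| init : Dom
| addE : Dom → Dom
| addX : Dom → Dom

/-- Number of declared eigenvariables. -/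
def Dom.numE : Dom → ℕ
| init => 0
| addE d => d.numE + 1
| addX d => d.numE

/-- Number of declared meta-variables. -/
def Dom.numX : Dom → ℕ
| init => 0
| addE d => d.numX
| addX d => d.numX + 1

/-- A term of domain `d` that is ground: only eigenvariables of `d`. -/
def TmOfDom (d : Dom) (t : Tm) : Prop := Tm.VarsBelow d.numE 0 t

/-- A formula of domain `d`. -/
def FmOfDom (d : Dom) (A : Fm) : Prop := Fm.VarsBelow d.numE d.numX A

/-- A context of domain `d`. -/
def CtxOfDom (d : Dom) (Γ : Multiset Fm) : Prop := ∀ A ∈ Γ, FmOfDom d A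

/-- Instantiations of domain `d`: each meta-variable declared in `d` is mapped
to a ground term over the eigenvariables declared before it. -/
def InstOK : Dom → (ℕ → Tm) → Prop
| .init, _ => True
| .addE d, ρ => InstOK d ρ
| .addX d, ρ => InstOK d ρ ∧ TmOfDom d (ρ d.numX)

/-- Extend an instantiation with the term `t` for the meta-variable `n`. -/
def extend (ρ : ℕ → Tm) (n : ℕ) (t : Tm) : ℕ → Tm := fun i => if i = n then t else ρ i

/-- The empty instantiation (of the initial domain, which declares no
meta-variables, so that the values below are irrelevant). -/
def emptyInst : ℕ → Tm := fun _ => Tm.fn 0 []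
/-- The ground one-sided sequent calculus `LK1` modulo the theory given by the
ground validity predicate `models` on sets of ground literals. -/
inductive LK1 (models : Set Lit → Prop) : Multiset Fm → Prop
| ax (Γ : Multiset Fm) : models (lits Γ) → LK1 models Γ
| conj {Γ A B} : LK1 models (A ::ₘ Γ) → LK1 models (B ::ₘ Γ) →
    LK1 models (Fm.conj A B ::ₘ Γ)
| disj {Γ A B} : LK1 models (A ::ₘ B ::ₘ Γ) → LK1 models (Fm.disj A B ::ₘ Γ)
| ex {Γ A} (t : Tm) : t.Ground →
    LK1 models (Fm.opn t A ::ₘ Fm.ex A ::ₘ Γ) → LK1 models (Fm.ex A ::ₘ Γ)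
| all {Γ A} (y : ℕ) : (∀ B ∈ (Fm.all A ::ₘ Γ), ¬ Fm.HasEv y B) →
    LK1 models (Fm.opn (Tm.ev y) A ::ₘ Γ) → LK1 models (Fm.all A ::ₘ Γ)
/-- The constraint-producing sequent calculus `DI`, parameterised by the
constraint sets `Psi` (indexed by the number of declared meta-variables),
the meet operator, the projections, and the constraint-producing predicate
`bbc` of the background reasoner. `DI d Γ σ` is the sequent `⊢^d Γ → σ`. -/
inductive DI (Psi : ℕ → Type) (meet : ∀ {n}, Psi n → Psi n → Psi n)
    (proj : ∀ {n}, Psi (n+1) → Psi n)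
    (bbc : ∀ d : Dom, Set Lit → Psi d.numX → Prop) :
    ∀ d : Dom, Multiset Fm → Psi d.numX → Prop
| ax {d : Dom} (Γ : Multiset Fm) (σ : Psi d.numX) :
    bbc d (lits Γ) σ → DI Psi meet proj bbc d Γ σ
| conj {d : Dom} {Γ A B} {σ σ' : Psi d.numX} :
    DI Psi meet proj bbc d (A ::ₘ Γ) σ → DI Psi meet proj bbc d (B ::ₘ Γ) σ' →
    DI Psi meet proj bbc d (Fm.conj A B ::ₘ Γ) (meet σ σ')
| disj {d : Dom} {Γ A B} {σ : Psi d.numX} :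
    DI Psi meet proj bbc d (A ::ₘ B ::ₘ Γ) σ →
    DI Psi meet proj bbc d (Fm.disj A B ::ₘ Γ) σ
| ex {d : Dom} {Γ A} {σ : Psi (d.numX + 1)} :
    DI Psi meet proj bbc d.addX (Fm.opn (Tm.mv d.numX) A ::ₘ Fm.ex A ::ₘ Γ) σ →
    DI Psi meet proj bbc d (Fm.ex A ::ₘ Γ) (proj σ)
| all {d : Dom} {Γ A} {σ : Psi d.numX} :
    DI Psi meet proj bbc d.addE (Fm.opn (Tm.ev d.numE) A ::ₘ Γ) σ →
    DI Psi meet proj bbc d (Fm.all A ::ₘ Γ) σ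
/-- The constraint-refining sequent calculus `SDI`, with sequential treatment
of conjunctive branching (in either order), parameterised by the lift
constraint structure and the constraint-refining predicate `bbr`.
`SDI d σ Γ σ'` is the sequent `σ → ⊢^d Γ → σ'`. -/
inductive SDI (Psi : ℕ → Type) (proj : ∀ {n}, Psi (n+1) → Psi n)
    (lift : ∀ {n}, Psi n → Psi (n+1))
    (bbr : ∀ d : Dom, Psi d.numX → Set Lit → Psi d.numX → Prop) :
    ∀ d : Dom, Psi d.numX → Multiset Fm → Psi d.numX → Prop
| ax {d : Dom} (σ : Psi d.numX) (Γ : Multiset Fm) (σ' : Psi d.numX) :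
    bbr d σ (lits Γ) σ' → SDI Psi proj lift bbr d σ Γ σ'
| conj0 {d : Dom} {Γ A B} {σ σ'' σ' : Psi d.numX} :
    SDI Psi proj lift bbr d σ (A ::ₘ Γ) σ'' →
    SDI Psi proj lift bbr d σ'' (B ::ₘ Γ) σ' →
    SDI Psi proj lift bbr d σ (Fm.conj A B ::ₘ Γ) σ'
| conj1 {d : Dom} {Γ A B} {σ σ'' σ' : Psi d.numX} :
    SDI Psi proj lift bbr d σ (B ::ₘ Γ) σ'' →
    SDI Psi proj lift bbr d σ'' (A ::ₘ Γ) σ' →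
    SDI Psi proj lift bbr d σ (Fm.conj A B ::ₘ Γ) σ'
| disj {d : Dom} {Γ A B} {σ σ' : Psi d.numX} :
    SDI Psi proj lift bbr d σ (A ::ₘ B ::ₘ Γ) σ' →
    SDI Psi proj lift bbr d σ (Fm.disj A B ::ₘ Γ) σ'
| ex {d : Dom} {Γ A} {σ : Psi d.numX} {σ' : Psi (d.numX + 1)} :
    SDI Psi proj lift bbr d.addX (lift σ) (Fm.opn (Tm.mv d.numX) A ::ₘ Fm.ex A ::ₘ Γ) σ' →
    SDI Psi proj lift bbr d σ (Fm.ex A ::ₘ Γ) (proj σ')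
| all {d : Dom} {Γ A} {σ σ' : Psi d.numX} :
    SDI Psi proj lift bbr d.addE σ (Fm.opn (Tm.ev d.numE) A ::ₘ Γ) σ' →
    SDI Psi proj lift bbr d σ (Fm.all A ::ₘ Γ) σ'

/-- The compatibility-based pre-order on `Ψ_d` (over the instantiations of
domain `d`). -/
def preD (Psi : ℕ → Type) (eps : ∀ {n}, (ℕ → Tm) → Psi n → Prop)
    (d : Dom) (σ σ' : Psi d.numX) : Prop :=
  ∀ ρ : ℕ → Tm, InstOK d ρ → eps ρ σ → eps ρ σ'

/-- The equivalence generated by the compatibility-based pre-order. -/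
def equD (Psi : ℕ → Type) (eps : ∀ {n}, (ℕ → Tm) → Psi n → Prop)
    (d : Dom) (σ σ' : Psi d.numX) : Prop :=
  preD Psi (fun ρ τ => eps ρ τ) d σ σ' ∧ preD Psi (fun ρ τ => eps ρ τ) d σ' σ

/-!
Induct on the `SDI` derivation, carrying an instantiation `ρ` compatible with the output
constraint: then `ρ` is compatible with the input constraint and the `ρ`-instance of the sequent
is `LK1`-derivable. At a leaf, A1 writes the output constraint as the meet of the input
constraint with one produced by the background reasoner, and Apg turns compatibility with the
latter into ground validity of the instantiated literals. At an ∃-step, Aε extends `ρ` by the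
term the constraint binds to the new meta-variable; this term is the `LK1` witness, and A↑
carries compatibility back to the input constraint. On the initial domain the `ρ`-instance of
`Γ` is `Γ` itself. When `P` is satisfiability, P1, P2 and A1 show that the output constraint of
every `SDI` derivation satisfies `P`, so some instantiation is compatible with it.
-/

namespace Tm

@[simp] lemma bsub_fn (k : ℕ) (u : Tm) (f : ℕ) (ts : List Tm) :
    bsub k u (fn f ts) = fn f (ts.map (bsub k u)) := by
  rw [bsub]; simp

@[simp] lemma msub_fn (ρ : ℕ → Tm) (f : ℕ) (ts : List Tm) :
    msub ρ (fn f ts) = fn f (ts.map (msub ρ)) := by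
  rw [msub]; simp

namespace VarsBelow

variable {ke kx : ℕ} {t : Tm}

lemma mono (h : VarsBelow ke kx t) {ke' kx' : ℕ} (he : ke ≤ ke') (hx : kx ≤ kx') :
    VarsBelow ke' kx' t := by
  induction h with
  | ev i hi => exact .ev i (hi.trans_le he)
  | mv i hi => exact .mv i (hi.trans_le hx)
  | fn f ts _ ih => exact .fn f ts ih

lemma bsub_eq (h : VarsBelow ke kx t) (k : ℕ) (u : Tm) : Tm.bsub k u t = t := by
  induction h with
  | ev i => simp [Tm.bsub]
  | mv i => simp [Tm.bsub]
  | fn f ts _ ih => simpa using (List.map_congr_left (g := id) ih).trans ts.map_id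

lemma msub_congr (h : VarsBelow ke kx t) {ρ ρ' : ℕ → Tm} (hρ : ∀ i < kx, ρ i = ρ' i) :
    t.msub ρ = t.msub ρ' := by
  induction h with
  | ev i => simp [msub]
  | mv i hi => simpa [msub] using hρ i hi
  | fn f ts _ ih => simp [List.map_congr_left ih]

lemma msub (h : VarsBelow ke kx t) {ρ : ℕ → Tm} (hρ : ∀ i < kx, VarsBelow ke 0 (ρ i)) :
    VarsBelow ke 0 (t.msub ρ) := by
  induction h with
  | ev i hi => simpa [Tm.msub] using .ev i hi
  | mv i hi => simpa [Tm.msub] using hρ i hi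
  | fn f ts _ ih =>
    rw [Tm.msub_fn]
    exact .fn f _ fun t' ht' => by
      obtain ⟨t, ht, rfl⟩ := List.mem_map.1 ht'
      exact ih t ht

lemma msub_eq (h : VarsBelow ke 0 t) (ρ : ℕ → Tm) : t.msub ρ = t := by
  induction h with
  | ev i => simp [Tm.msub]
  | mv i hi => omega
  | fn f ts _ ih => simpa using (List.map_congr_left (g := id) ih).trans ts.map_id

lemma ground (h : VarsBelow ke 0 t) : t.Ground := by
  induction h with
  | ev i => exact .ev i
  | mv i hi => omega
  | fn f ts _ ih => exact .fn f ts ih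

end VarsBelow

lemma HasEv.lt {y : ℕ} {t : Tm} (h : HasEv y t) {ke kx : ℕ} (hv : VarsBelow ke kx t) :
    y < ke := by
  induction h with
  | ev => cases hv; assumption
  | fn f ts t ht _ ih => cases hv with | fn _ _ hts => exact ih (hts t ht)

end Tm

namespace Fm

namespace VarsBelow

variable {ke kx : ℕ} {A : Fm}

lemma mono (h : VarsBelow ke kx A) {ke' kx' : ℕ} (he : ke ≤ ke') (hx : kx ≤ kx') :
    VarsBelow ke' kx' A := by
  induction h with
  | lit b p ts hts => exact .lit b p ts fun t ht => (hts t ht).mono he hx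
  | conj _ _ ih₁ ih₂ => exact .conj ih₁ ih₂
  | disj _ _ ih₁ ih₂ => exact .disj ih₁ ih₂
  | all _ ih => exact .all ih
  | ex _ ih => exact .ex ih

/-- Formulas with declared variables contain no de Bruijn index at all (`Tm.VarsBelow` has no
`bv` case), so opening a quantifier leaves its body unchanged. -/
lemma bsub_eq (h : VarsBelow ke kx A) (k : ℕ) (u : Tm) : A.bsub k u = A := by
  induction h generalizing k with
  | lit b p ts hts =>
    simpa [bsub] using (List.map_congr_left (g := id) fun t ht => (hts t ht).bsub_eq k u).trans ts.map_id
  | conj _ _ ih₁ ih₂ => simp [bsub, ih₁, ih₂]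
  | disj _ _ ih₁ ih₂ => simp [bsub, ih₁, ih₂]
  | all _ ih => simp [bsub, ih]
  | ex _ ih => simp [bsub, ih]

lemma opn_eq (h : VarsBelow ke kx A) (u : Tm) : A.opn u = A :=
  h.bsub_eq 0 u

lemma msub_congr (h : VarsBelow ke kx A) {ρ ρ' : ℕ → Tm} (hρ : ∀ i < kx, ρ i = ρ' i) :
    A.msub ρ = A.msub ρ' := by
  induction h with
  | lit b p ts hts => simp [Fm.msub, List.map_congr_left fun t ht => (hts t ht).msub_congr hρ]
  | conj _ _ ih₁ ih₂ => simp [Fm.msub, ih₁, ih₂]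
  | disj _ _ ih₁ ih₂ => simp [Fm.msub, ih₁, ih₂]
  | all _ ih => simp [Fm.msub, ih]
  | ex _ ih => simp [Fm.msub, ih]

lemma msub (h : VarsBelow ke kx A) {ρ : ℕ → Tm} (hρ : ∀ i < kx, Tm.VarsBelow ke 0 (ρ i)) :
    VarsBelow ke 0 (A.msub ρ) := by
  induction h with
  | lit b p ts hts =>
    exact .lit b p _ fun t' ht' => by
      obtain ⟨t, ht, rfl⟩ := List.mem_map.1 ht'
      exact (hts t ht).msub hρ
  | conj _ _ ih₁ ih₂ => exact .conj ih₁ ih₂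
  | disj _ _ ih₁ ih₂ => exact .disj ih₁ ih₂
  | all _ ih => exact .all ih
  | ex _ ih => exact .ex ih

lemma msub_eq (h : VarsBelow ke 0 A) (ρ : ℕ → Tm) : A.msub ρ = A := by
  induction h with
  | lit b p ts hts =>
    simpa [Fm.msub] using (List.map_congr_left (g := id) fun t ht => (hts t ht).msub_eq ρ).trans ts.map_id
  | conj _ _ ih₁ ih₂ => simp [Fm.msub, ih₁, ih₂]
  | disj _ _ ih₁ ih₂ => simp [Fm.msub, ih₁, ih₂]
  | all _ ih => simp [Fm.msub, ih]
  | ex _ ih => simp [Fm.msub, ih]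

end VarsBelow

lemma HasEv.lt {y : ℕ} {A : Fm} (h : HasEv y A) {ke kx : ℕ} (hv : VarsBelow ke kx A) :
    y < ke := by
  induction h with
  | lit b p ts t ht he => cases hv with | lit _ _ _ hts => exact he.lt (hts t ht)
  | conjl _ ih => cases hv with | conj h _ => exact ih h
  | conjr _ ih => cases hv with | conj _ h => exact ih h
  | disjl _ ih => cases hv with | disj h _ => exact ih h
  | disjr _ ih => cases hv with | disj _ h => exact ih h
  | all _ ih => cases hv with | all h => exact ih h
  | ex _ ih => cases hv with | ex h => exact ih h

end Fm

lemma lits_map_msub (ρ : ℕ → Tm) (Γ : Multiset Fm) :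
    lits (Γ.map (Fm.msub ρ)) = Lit.msub ρ '' lits Γ := by
  ext ⟨b, p, ts⟩
  simp only [lits, Lit.msub, Set.mem_ofPred_eq, Set.mem_image, Multiset.mem_map]
  constructor
  · rintro ⟨B, hB, hBρ⟩
    cases B <;> simp only [Fm.msub, reduceCtorEq, Fm.lit.injEq] at hBρ
    obtain ⟨rfl, rfl, rfl⟩ := hBρ
    exact ⟨(_, _, _), hB, rfl⟩
  · rintro ⟨⟨b', p', ts'⟩, hl, hlρ⟩
    cases hlρ
    exact ⟨.lit b' p' ts', hl, rfl⟩

lemma extend_of_ne {ρ : ℕ → Tm} {n i : ℕ} (t : Tm) (h : i ≠ n) : extend ρ n t i = ρ i :=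
  if_neg h

lemma extend_self (ρ : ℕ → Tm) (n : ℕ) (t : Tm) : extend ρ n t n = t :=
  if_pos rfl

lemma InstOK.congr : ∀ {d : Dom} {ρ ρ' : ℕ → Tm},
    (∀ i < d.numX, ρ i = ρ' i) → InstOK d ρ → InstOK d ρ'
  | .init, _, _, _, _ => trivial
  | .addE d, _, _, h, hρ => InstOK.congr (d := d) h hρ
  | .addX d, _, _, h, hρ =>
    ⟨InstOK.congr (fun i hi => h i (Nat.lt_succ_of_lt hi)) hρ.1, h d.numX (Nat.lt_succ_self _) ▸ hρ.2⟩

lemma InstOK.varsBelow : ∀ {d : Dom} {ρ : ℕ → Tm}, InstOK d ρ →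
    ∀ i < d.numX, Tm.VarsBelow d.numE 0 (ρ i)
  | .init, _, _, _, hi => absurd hi (Nat.not_lt_zero _)
  | .addE d, _, hρ, i, hi => (InstOK.varsBelow (d := d) hρ i hi).mono (Nat.le_succ _) le_rfl
  | .addX d, _, hρ, i, hi => by
    rcases Nat.lt_succ_iff_lt_or_eq.1 hi with hi | rfl
    exacts [hρ.1.varsBelow i hi, hρ.2]

lemma InstOK.extend {d : Dom} {ρ : ℕ → Tm} {t : Tm} (hρ : InstOK d ρ) (ht : TmOfDom d t) :
    InstOK d.addX (extend ρ d.numX t) :=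
  ⟨hρ.congr fun _ hi => (extend_of_ne t hi.ne).symm, by rwa [extend_self]⟩

lemma ctxOfDom_cons {d : Dom} {A : Fm} {Γ : Multiset Fm} :
    CtxOfDom d (A ::ₘ Γ) ↔ FmOfDom d A ∧ CtxOfDom d Γ :=
  Multiset.forall_mem_cons

lemma CtxOfDom.mono {d d' : Dom} {Γ : Multiset Fm} (hΓ : CtxOfDom d Γ)
    (he : d.numE ≤ d'.numE) (hx : d.numX ≤ d'.numX) : CtxOfDom d' Γ :=
  fun A hA => (hΓ A hA).mono he hx

lemma CtxOfDom.addX_of_ex {d : Dom} {A : Fm} {Γ : Multiset Fm} (h : CtxOfDom d (.ex A ::ₘ Γ)) :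
    CtxOfDom d.addX (A.opn (.mv d.numX) ::ₘ .ex A ::ₘ Γ) := by
  obtain ⟨hA, -⟩ := ctxOfDom_cons.1 h
  rcases hA with _ | _ | _ | _ | hA
  rw [hA.opn_eq]
  exact ctxOfDom_cons.2 ⟨hA.mono le_rfl (Nat.le_succ _), h.mono le_rfl (Nat.le_succ _)⟩

lemma CtxOfDom.addE_of_all {d : Dom} {A : Fm} {Γ : Multiset Fm} (h : CtxOfDom d (.all A ::ₘ Γ)) :
    CtxOfDom d.addE (A.opn (.ev d.numE) ::ₘ Γ) := by
  obtain ⟨hA, hΓ⟩ := ctxOfDom_cons.1 h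
  rcases hA with _ | _ | _ | hA
  rw [hA.opn_eq]
  exact ctxOfDom_cons.2 ⟨hA.mono (Nat.le_succ _) le_rfl, hΓ.mono (Nat.le_succ _) le_rfl⟩

lemma CtxOfDom.varsBelow_of_mem_lits {d : Dom} {Γ : Multiset Fm} (hΓ : CtxOfDom d Γ) :
    ∀ l ∈ lits Γ, ∀ t ∈ l.2.2, Tm.VarsBelow d.numE d.numX t := by
  rintro l hl t ht
  rcases hΓ _ hl with ⟨_, _, _, hts⟩
  exact hts t ht

lemma CtxOfDom.varsBelow_msub {d : Dom} {Γ : Multiset Fm} {ρ : ℕ → Tm} (hΓ : CtxOfDom d Γ)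
    (hρ : InstOK d ρ) : ∀ B ∈ Γ.map (Fm.msub ρ), Fm.VarsBelow d.numE 0 B := by
  simp only [Multiset.mem_map, forall_exists_index, and_imp, forall_apply_eq_imp_iff₂]
  exact fun A hA => (hΓ A hA).msub hρ.varsBelow

lemma CtxOfDom.map_msub_congr {d : Dom} {Γ : Multiset Fm} {ρ ρ' : ℕ → Tm} (hΓ : CtxOfDom d Γ)
    (hρ : ∀ i < d.numX, ρ i = ρ' i) : Γ.map (Fm.msub ρ) = Γ.map (Fm.msub ρ') :=
  Multiset.map_congr rfl fun A hA => (hΓ A hA).msub_congr hρ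

namespace LK1

variable {models : Set Lit → Prop} {d : Dom} {A : Fm} {Γ : Multiset Fm} {ρ : ℕ → Tm}

lemma msub_ex {t : Tm} (h : CtxOfDom d (.ex A ::ₘ Γ)) (hρ : InstOK d ρ) (ht : TmOfDom d t)
    (hprem : LK1 models
      ((A.opn (.mv d.numX) ::ₘ .ex A ::ₘ Γ).map (Fm.msub (extend ρ d.numX t)))) :
    LK1 models ((.ex A ::ₘ Γ).map (Fm.msub ρ)) := by
  obtain ⟨hA, -⟩ := ctxOfDom_cons.1 h
  rcases hA with _ | _ | _ | _ | hA
  have hAρ : Fm.VarsBelow d.numE 0 (A.msub ρ) := hA.msub hρ.varsBelow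
  have hext : ∀ i < d.numX, extend ρ d.numX t i = ρ i := fun _ hi => extend_of_ne t hi.ne
  rw [hA.opn_eq, CtxOfDom.map_msub_congr (ctxOfDom_cons.2 ⟨hA, h⟩) hext] at hprem
  simp only [Multiset.map_cons, Fm.msub] at hprem ⊢
  exact .ex t ht.ground (by rwa [hAρ.opn_eq])

lemma msub_all (h : CtxOfDom d (.all A ::ₘ Γ)) (hρ : InstOK d ρ)
    (hprem : LK1 models ((A.opn (.ev d.numE) ::ₘ Γ).map (Fm.msub ρ))) :
    LK1 models ((.all A ::ₘ Γ).map (Fm.msub ρ)) := by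
  have hfresh : ∀ B ∈ (.all A ::ₘ Γ).map (Fm.msub ρ), ¬ B.HasEv d.numE :=
    fun B hB hev => (hev.lt (h.varsBelow_msub hρ B hB)).false
  obtain ⟨hA, -⟩ := ctxOfDom_cons.1 h
  rcases hA with _ | _ | _ | hA
  rw [Multiset.map_cons, Fm.msub] at hfresh ⊢
  rw [hA.opn_eq, Multiset.map_cons] at hprem
  exact .all d.numE hfresh (by rwa [(hA.msub hρ.varsBelow).opn_eq])

end LK1

namespace SDI

variable {Psi : ℕ → Type} {meet : ∀ {n}, Psi n → Psi n → Psi n}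
  {proj : ∀ {n}, Psi (n+1) → Psi n} {lift : ∀ {n}, Psi n → Psi (n+1)}
  {bind : ∀ {n}, Psi (n+1) → (ℕ → Tm) → Tm} {eps : ∀ {n}, (ℕ → Tm) → Psi n → Prop}
  {P : ∀ n, Psi n → Prop} {models : Set Lit → Prop}
  {bbc : ∀ d : Dom, Set Lit → Psi d.numX → Prop}
  {bbr : ∀ d : Dom, Psi d.numX → Set Lit → Psi d.numX → Prop}

lemma sound_ax
    (Ameet : ∀ {n} (ρ : ℕ → Tm) (σ σ' : Psi n),
      (eps ρ σ ∧ eps ρ σ') ↔ eps ρ (meet σ σ'))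
    (Apg : ∀ (d : Dom) (A : Set Lit),
      (∀ l ∈ A, ∀ t ∈ l.2.2, Tm.VarsBelow d.numE d.numX t) →
      ∀ ρ : ℕ → Tm, InstOK d ρ →
        (models ((Lit.msub ρ) '' A) ↔ ∃ σ : Psi d.numX, bbc d A σ ∧ eps ρ σ))
    (A1 : ∀ (d : Dom) (A : Set Lit) (σ σ' : Psi d.numX), bbr d σ A σ' →
      ∃ σ'' : Psi d.numX,
        equD Psi (fun ρ τ => eps ρ τ) d σ' (meet σ σ'') ∧
          P d.numX (meet σ σ'') ∧ bbc d A σ'')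
    {d : Dom} {σ σ' : Psi d.numX} {Γ : Multiset Fm} {ρ : ℕ → Tm}
    (h : bbr d σ (lits Γ) σ') (hΓ : CtxOfDom d Γ) (hρ : InstOK d ρ) (hσ' : eps ρ σ') :
    eps ρ σ ∧ LK1 models (Γ.map (Fm.msub ρ)) := by
  obtain ⟨σ'', hequ, -, hbbc⟩ := A1 d _ σ σ' h
  obtain ⟨hσ, hσ''⟩ := (Ameet ρ σ σ'').2 (hequ.1 ρ hρ hσ')
  refine ⟨hσ, .ax _ ?_⟩
  rw [lits_map_msub]
  exact (Apg d _ hΓ.varsBelow_of_mem_lits ρ hρ).2 ⟨σ'', hbbc, hσ''⟩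

theorem sound
    (Aeps : ∀ (d : Dom) (ρ : ℕ → Tm) (σ : Psi (d.numX + 1)), InstOK d ρ →
      eps ρ (proj σ) → eps (extend ρ d.numX (bind σ ρ)) σ)
    (Abind : ∀ (d : Dom) (ρ : ℕ → Tm) (σ : Psi (d.numX + 1)), InstOK d ρ →
      TmOfDom d (bind σ ρ))
    (Ameet : ∀ {n} (ρ : ℕ → Tm) (σ σ' : Psi n),
      (eps ρ σ ∧ eps ρ σ') ↔ eps ρ (meet σ σ'))
    (Apg : ∀ (d : Dom) (A : Set Lit),
      (∀ l ∈ A, ∀ t ∈ l.2.2, Tm.VarsBelow d.numE d.numX t) →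
      ∀ ρ : ℕ → Tm, InstOK d ρ →
        (models ((Lit.msub ρ) '' A) ↔ ∃ σ : Psi d.numX, bbc d A σ ∧ eps ρ σ))
    (Alift : ∀ (d : Dom) (ρ : ℕ → Tm) (σ : Psi d.numX) (σ' : Psi (d.numX + 1)),
      InstOK d ρ →
      (eps (extend ρ d.numX (bind σ' ρ)) (lift σ) ↔ eps ρ σ))
    (A1 : ∀ (d : Dom) (A : Set Lit) (σ σ' : Psi d.numX), bbr d σ A σ' →
      ∃ σ'' : Psi d.numX,
        equD Psi (fun ρ τ => eps ρ τ) d σ' (meet σ σ'') ∧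
          P d.numX (meet σ σ'') ∧ bbc d A σ'')
    {d : Dom} {σ σ' : Psi d.numX} {Γ : Multiset Fm} (h : SDI Psi proj lift bbr d σ Γ σ') :
    ∀ {ρ : ℕ → Tm}, CtxOfDom d Γ → InstOK d ρ → eps ρ σ' →
      eps ρ σ ∧ LK1 models (Γ.map (Fm.msub ρ)) := by
  induction h with
  | ax σ Γ σ' h => exact fun hΓ hρ hσ' => sound_ax (bbr := bbr) Ameet Apg A1 h hΓ hρ hσ'
  | conj0 _ _ ih₁ ih₂ =>
    intro ρ hΓ hρ hσ'
    obtain ⟨⟨⟩ | ⟨hA, hB⟩, hΓ⟩ := ctxOfDom_cons.1 hΓ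
    obtain ⟨hσ'', hB⟩ := ih₂ (ctxOfDom_cons.2 ⟨hB, hΓ⟩) hρ hσ'
    obtain ⟨hσ, hA⟩ := ih₁ (ctxOfDom_cons.2 ⟨hA, hΓ⟩) hρ hσ''
    simp only [Multiset.map_cons, Fm.msub] at hA hB ⊢
    exact ⟨hσ, .conj hA hB⟩
  | conj1 _ _ ih₁ ih₂ =>
    intro ρ hΓ hρ hσ'
    obtain ⟨⟨⟩ | ⟨hA, hB⟩, hΓ⟩ := ctxOfDom_cons.1 hΓ
    obtain ⟨hσ'', hA⟩ := ih₂ (ctxOfDom_cons.2 ⟨hA, hΓ⟩) hρ hσ'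
    obtain ⟨hσ, hB⟩ := ih₁ (ctxOfDom_cons.2 ⟨hB, hΓ⟩) hρ hσ''
    simp only [Multiset.map_cons, Fm.msub] at hA hB ⊢
    exact ⟨hσ, .conj hA hB⟩
  | disj _ ih =>
    intro ρ hΓ hρ hσ'
    obtain ⟨⟨⟩ | ⟨⟩ | ⟨hA, hB⟩, hΓ⟩ := ctxOfDom_cons.1 hΓ
    obtain ⟨hσ, hAB⟩ := ih (ctxOfDom_cons.2 ⟨hA, ctxOfDom_cons.2 ⟨hB, hΓ⟩⟩) hρ hσ'
    simp only [Multiset.map_cons, Fm.msub] at hAB ⊢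
    exact ⟨hσ, .disj hAB⟩
  | @ex d _ _ σ σ' _ ih =>
    intro ρ hΓ hρ hσ'
    have hbind := Abind d ρ σ' hρ
    obtain ⟨hlift, hprem⟩ := ih hΓ.addX_of_ex (hρ.extend hbind) (Aeps d ρ σ' hρ hσ')
    exact ⟨(Alift d ρ σ σ' hρ).1 hlift, LK1.msub_ex hΓ hρ hbind hprem⟩
  | all _ ih =>
    intro ρ hΓ hρ hσ'
    obtain ⟨hσ, hprem⟩ := ih hΓ.addE_of_all hρ hσ'
    exact ⟨hσ, LK1.msub_all hΓ hρ hprem⟩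

theorem LK1_of_init
    (Aeps : ∀ (d : Dom) (ρ : ℕ → Tm) (σ : Psi (d.numX + 1)), InstOK d ρ →
      eps ρ (proj σ) → eps (extend ρ d.numX (bind σ ρ)) σ)
    (Abind : ∀ (d : Dom) (ρ : ℕ → Tm) (σ : Psi (d.numX + 1)), InstOK d ρ →
      TmOfDom d (bind σ ρ))
    (Ameet : ∀ {n} (ρ : ℕ → Tm) (σ σ' : Psi n),
      (eps ρ σ ∧ eps ρ σ') ↔ eps ρ (meet σ σ'))
    (Apg : ∀ (d : Dom) (A : Set Lit),
      (∀ l ∈ A, ∀ t ∈ l.2.2, Tm.VarsBelow d.numE d.numX t) →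
      ∀ ρ : ℕ → Tm, InstOK d ρ →
        (models ((Lit.msub ρ) '' A) ↔ ∃ σ : Psi d.numX, bbc d A σ ∧ eps ρ σ))
    (Alift : ∀ (d : Dom) (ρ : ℕ → Tm) (σ : Psi d.numX) (σ' : Psi (d.numX + 1)),
      InstOK d ρ →
      (eps (extend ρ d.numX (bind σ' ρ)) (lift σ) ↔ eps ρ σ))
    (A1 : ∀ (d : Dom) (A : Set Lit) (σ σ' : Psi d.numX), bbr d σ A σ' →
      ∃ σ'' : Psi d.numX,
        equD Psi (fun ρ τ => eps ρ τ) d σ' (meet σ σ'') ∧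
          P d.numX (meet σ σ'') ∧ bbc d A σ'')
    {σ σ' : Psi Dom.init.numX} {Γ : Multiset Fm} {ρ : ℕ → Tm}
    (h : SDI Psi proj lift bbr .init σ Γ σ') (hΓ : CtxOfDom .init Γ) (hσ' : eps ρ σ') :
    LK1 models Γ := by
  have hground : Γ.map (Fm.msub ρ) = Γ :=
    (Multiset.map_congr rfl fun A hA => (hΓ A hA).msub_eq ρ).trans (Multiset.map_id' Γ)
  simpa only [hground] using (sound Aeps Abind Ameet Apg Alift A1 h hΓ trivial hσ').2

theorem P_output
    (P1 : ∀ (d : Dom) (σ : Psi (d.numX + 1)),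
      P (d.numX + 1) σ ↔ P d.numX (proj σ))
    (P2 : ∀ (d : Dom) (σ σ' : Psi d.numX), P d.numX σ →
      preD Psi (fun ρ τ => eps ρ τ) d σ σ' → P d.numX σ')
    (A1 : ∀ (d : Dom) (A : Set Lit) (σ σ' : Psi d.numX), bbr d σ A σ' →
      ∃ σ'' : Psi d.numX,
        equD Psi (fun ρ τ => eps ρ τ) d σ' (meet σ σ'') ∧
          P d.numX (meet σ σ'') ∧ bbc d A σ'')
    {d : Dom} {σ σ' : Psi d.numX} {Γ : Multiset Fm} (h : SDI Psi proj lift bbr d σ Γ σ') :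
    P d.numX σ' := by
  induction h with
  | ax σ Γ σ' h =>
    obtain ⟨σ'', hequ, hP, -⟩ := A1 _ _ _ _ h
    exact P2 _ _ _ hP hequ.2
  | conj0 _ _ _ ih | conj1 _ _ _ ih | disj _ ih | all _ ih => exact ih
  | ex _ ih => exact (P1 _ _).1 ih

end SDI

theorem SDI_sound_LK1_initial_general (Psi : ℕ → Type) (meet : ∀ {n}, Psi n → Psi n → Psi n)
    (proj : ∀ {n}, Psi (n+1) → Psi n) (lift : ∀ {n}, Psi n → Psi (n+1))
    (bind : ∀ {n}, Psi (n+1) → (ℕ → Tm) → Tm)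
    (eps : ∀ {n}, (ℕ → Tm) → Psi n → Prop)
    (P : ∀ n, Psi n → Prop)
    (models : Set Lit → Prop)
    (bbc : ∀ d : Dom, Set Lit → Psi d.numX → Prop)
    (bbr : ∀ d : Dom, Psi d.numX → Set Lit → Psi d.numX → Prop)
    (Aeps : ∀ (d : Dom) (ρ : ℕ → Tm) (σ : Psi (d.numX + 1)), InstOK d ρ →
      eps ρ (proj σ) → eps (extend ρ d.numX (bind σ ρ)) σ)
    (Abind : ∀ (d : Dom) (ρ : ℕ → Tm) (σ : Psi (d.numX + 1)), InstOK d ρ →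
      TmOfDom d (bind σ ρ))
    (Ameet : ∀ {n} (ρ : ℕ → Tm) (σ σ' : Psi n),
      (eps ρ σ ∧ eps ρ σ') ↔ eps ρ (meet σ σ'))
    (Apg : ∀ (d : Dom) (A : Set Lit),
      (∀ l ∈ A, ∀ t ∈ l.2.2, Tm.VarsBelow d.numE d.numX t) →
      ∀ ρ : ℕ → Tm, InstOK d ρ →
        (models ((Lit.msub ρ) '' A) ↔ ∃ σ : Psi d.numX, bbc d A σ ∧ eps ρ σ))
    (Alift : ∀ (d : Dom) (ρ : ℕ → Tm) (σ : Psi d.numX) (σ' : Psi (d.numX + 1)),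
      InstOK d ρ →
      (eps (extend ρ d.numX (bind σ' ρ)) (lift σ) ↔ eps ρ σ))
    (P1 : ∀ (d : Dom) (σ : Psi (d.numX + 1)),
      P (d.numX + 1) σ ↔ P d.numX (proj σ))
    (P2 : ∀ (d : Dom) (σ σ' : Psi d.numX), P d.numX σ →
      preD Psi (fun ρ τ => eps ρ τ) d σ σ' → P d.numX σ')
    (A1 : ∀ (d : Dom) (A : Set Lit) (σ σ' : Psi d.numX), bbr d σ A σ' →
      ∃ σ'' : Psi d.numX,
        equD Psi (fun ρ τ => eps ρ τ) d σ' (meet σ σ'') ∧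
          P d.numX (meet σ σ'') ∧ bbc d A σ'') :
    (∀ (Γ : Multiset Fm) (σ σ' : Psi Dom.init.numX), CtxOfDom Dom.init Γ →
      SDI Psi (fun τ => proj τ) (fun τ => lift τ) bbr Dom.init σ Γ σ' →
      eps emptyInst σ' → LK1 models Γ) ∧
    ((∀ (d : Dom) (σc : Psi d.numX),
        P d.numX σc ↔ ∃ ρ : ℕ → Tm, InstOK d ρ ∧ eps ρ σc) →
      ∀ (Γ : Multiset Fm) (σ σ' : Psi Dom.init.numX), CtxOfDom Dom.init Γ →
        SDI Psi (fun τ => proj τ) (fun τ => lift τ) bbr Dom.init σ Γ σ' →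
        LK1 models Γ) := by
  refine ⟨fun Γ σ σ' hΓ h hσ' => SDI.LK1_of_init Aeps Abind Ameet Apg Alift A1 h hΓ hσ',
    fun hsat Γ σ σ' hΓ h => ?_⟩
  obtain ⟨ρ, -, hσ'⟩ := (hsat .init σ').1 (SDI.P_output P1 P2 A1 h)
  exact SDI.LK1_of_init Aeps Abind Ameet Apg Alift A1 h hΓ hσ'

/-- Soundness of `SDI` w.r.t. `LK1` on the initial domain, under the full
axiomatisation (Aπ, Aε, A∧, Apg, A↑, P1, P2, A1, A2, with the pre-order taken
to be the compatibility-based one): if `σ → ⊢^{d₀} Γ → σ'` is derivable in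
`SDI` and the empty instantiation is compatible with `σ'`, then `⊢ Γ` is
derivable in `LK1`; and in particular, when `P` is the predicate 'being
satisfiable', derivability of `σ → ⊢^{d₀} Γ → σ'` in `SDI` implies
derivability of `⊢ Γ` in `LK1`. -/
theorem SDI_sound_LK1_initial (Psi : ℕ → Type) (meet : ∀ {n}, Psi n → Psi n → Psi n)
    (proj : ∀ {n}, Psi (n+1) → Psi n) (lift : ∀ {n}, Psi n → Psi (n+1))
    (bind : ∀ {n}, Psi (n+1) → (ℕ → Tm) → Tm)
    (eps : ∀ {n}, (ℕ → Tm) → Psi n → Prop)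
    (P : ∀ n, Psi n → Prop)
    (models : Set Lit → Prop)
    (bbc : ∀ d : Dom, Set Lit → Psi d.numX → Prop)
    (bbr : ∀ d : Dom, Psi d.numX → Set Lit → Psi d.numX → Prop)
    (Airrel : ∀ {n} (ρ ρ' : ℕ → Tm) (σ : Psi n),
      (∀ i < n, ρ i = ρ' i) → eps ρ σ → eps ρ' σ)
    (Aproj : ∀ (d : Dom) (ρ : ℕ → Tm) (t : Tm) (σ : Psi (d.numX + 1)),
      InstOK d ρ → TmOfDom d t → eps (extend ρ d.numX t) σ → eps ρ (proj σ))
    (Aeps : ∀ (d : Dom) (ρ : ℕ → Tm) (σ : Psi (d.numX + 1)), InstOK d ρ →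
      eps ρ (proj σ) → eps (extend ρ d.numX (bind σ ρ)) σ)
    (Abind : ∀ (d : Dom) (ρ : ℕ → Tm) (σ : Psi (d.numX + 1)), InstOK d ρ →
      TmOfDom d (bind σ ρ))
    (Ameet : ∀ {n} (ρ : ℕ → Tm) (σ σ' : Psi n),
      (eps ρ σ ∧ eps ρ σ') ↔ eps ρ (meet σ σ'))
    (Apg : ∀ (d : Dom) (A : Set Lit),
      (∀ l ∈ A, ∀ t ∈ l.2.2, Tm.VarsBelow d.numE d.numX t) →
      ∀ ρ : ℕ → Tm, InstOK d ρ →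
        (models ((Lit.msub ρ) '' A) ↔ ∃ σ : Psi d.numX, bbc d A σ ∧ eps ρ σ))
    (Alift : ∀ (d : Dom) (ρ : ℕ → Tm) (σ : Psi d.numX) (σ' : Psi (d.numX + 1)),
      InstOK d ρ →
      (eps (extend ρ d.numX (bind σ' ρ)) (lift σ) ↔ eps ρ σ))
    (P1 : ∀ (d : Dom) (σ : Psi (d.numX + 1)),
      P (d.numX + 1) σ ↔ P d.numX (proj σ))
    (P2 : ∀ (d : Dom) (σ σ' : Psi d.numX), P d.numX σ →
      preD Psi (fun ρ τ => eps ρ τ) d σ σ' → P d.numX σ')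
    (A1 : ∀ (d : Dom) (A : Set Lit) (σ σ' : Psi d.numX), bbr d σ A σ' →
      ∃ σ'' : Psi d.numX,
        equD Psi (fun ρ τ => eps ρ τ) d σ' (meet σ σ'') ∧
          P d.numX (meet σ σ'') ∧ bbc d A σ'')
    (A2 : ∀ (d : Dom) (A : Set Lit) (σ σ' : Psi d.numX),
      P d.numX (meet σ σ') → bbc d A σ' →
      ∃ σ'' : Psi d.numX,
        equD Psi (fun ρ τ => eps ρ τ) d σ'' (meet σ σ') ∧
          bbr d σ A σ'') :
    (∀ (Γ : Multiset Fm) (σ σ' : Psi Dom.init.numX), CtxOfDom Dom.init Γ →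
      SDI Psi (fun τ => proj τ) (fun τ => lift τ) bbr Dom.init σ Γ σ' →
      eps emptyInst σ' → LK1 models Γ) ∧
    ((∀ (d : Dom) (σc : Psi d.numX),
        P d.numX σc ↔ ∃ ρ : ℕ → Tm, InstOK d ρ ∧ eps ρ σc) →
      ∀ (Γ : Multiset Fm) (σ σ' : Psi Dom.init.numX), CtxOfDom Dom.init Γ →
        SDI Psi (fun τ => proj τ) (fun τ => lift τ) bbr Dom.init σ Γ σ' →
        LK1 models Γ) :=
  SDI_sound_LK1_initial_general Psi meet proj lift bind eps P models bbc bbr Aeps Abind Ameet Apg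
    Alift P1 P2 A1
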